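/- Let T be a perfect unit-length tree of height α ∈ ℕ with n = 2^α leaves. The values of k ∈ {1,…,n} that maximise m(T,k), the number of size-k maxPD sets, are k = ⌊2n/3⌋ for all n and, additionally, k = ⌊2n/3⌋ + 1 when n ≡ 1 (mod 3). -/

import Mathlib

/-!
Rooted phylogenetic `X`-trees with positive edge lengths.

A tree on a finite vertex type `V` is encoded by its parent function: the root
has no parent, every other vertex has one, and iterating the parent function
reaches the root.  The edge into a non-root vertex `v` has length `len v`, and
`hgt v` is the distance from the root to `v`.  Leaves are the vertices with no
children; the taxon set `X` of the paper is the set `leaves` of leaves.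
Every non-leaf, non-root vertex has out-degree (number of children) at least 2.
-/

noncomputable section

attribute [local instance] Classical.propDecidable

structure PhyloTree (V : Type) [Fintype V] [DecidableEq V] where
  root : V
  parent : V → Option V
  len : V → ℝ
  hgt : V → ℝ
  parent_root : parent root = none
  parent_isSome : ∀ v, v ≠ root → (parent v).isSome
  reaches_root : ∀ v, Relation.ReflTransGen (fun a b => parent a = some b) v root
  hgt_root : hgt root = 0
  hgt_eq : ∀ v u, parent v = some u → hgt v = hgt u + len v
  len_pos : ∀ v, v ≠ root → 0 < len v
  outdeg_ge_two : ∀ v, v ≠ root → (∃ u, parent u = some v) →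
    2 ≤ Set.ncard {u | parent u = some v}

namespace PhyloTree

variable {V : Type} [Fintype V] [DecidableEq V]

/-- `T.step a b` : `b` is the parent of `a`. -/
def step (T : PhyloTree V) (a b : V) : Prop := T.parent a = some b

/-- `T.anc u v` : `u` is an ancestor of `v`, i.e. `u` lies on the (unique) path
from the root to `v` (reflexively). -/
def anc (T : PhyloTree V) (u v : V) : Prop := Relation.ReflTransGen T.step v u

/-- a leaf is a vertex with no children. -/
def IsLeaf (T : PhyloTree V) (v : V) : Prop := ∀ u, T.parent u ≠ some v

/-- the leaf set (the taxon set `X`). -/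
def leaves (T : PhyloTree V) : Set V := {v | T.IsLeaf v}

/-- Phylogenetic diversity of a set `Y`: the total length of all edges `e`
whose set of descendant leaves meets `Y` (the edge into a non-root vertex `v`
has length `T.len v`). -/
def PD (T : PhyloTree V) (Y : Set V) : ℝ :=
  ∑ v : V, if v ≠ T.root ∧ ∃ x ∈ Y, T.IsLeaf x ∧ T.anc v x then T.len v else 0

/-- the ultrametric condition: all leaves are at the same distance from the root. -/
def Ultrametric (T : PhyloTree V) : Prop :=
  ∀ x y, T.IsLeaf x → T.IsLeaf y → T.hgt x = T.hgt y

/-- `R d`: the set of vertices within distance `d` above some leaf. -/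
def R (T : PhyloTree V) (d : ℝ) : Set V :=
  {v | ∃ x, T.IsLeaf x ∧ T.anc v x ∧ T.hgt x - T.hgt v ≤ d}

/-- adjacency in the forest induced by `T` on a vertex set `S`. -/
def adjIn (T : PhyloTree V) (S : Set V) (u v : V) : Prop :=
  u ∈ S ∧ v ∈ S ∧ (T.parent u = some v ∨ T.parent v = some u)

/-- the connected components of the forest induced by `T` on `S`. -/
def components (T : PhyloTree V) (S : Set V) : Set (Set V) :=
  {C | ∃ v ∈ S, C = S ∩ {u | Relation.ReflTransGen (T.adjIn S) v u}}

/-- `c d`: the number of connected components of the forest `T[R(d)]`. -/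
def ccount (T : PhyloTree V) (d : ℝ) : ℕ := (T.components (T.R d)).ncard

/-- `k` is a branching value if `T[R(d)]` has exactly `k` components for some `d ≥ 0`. -/
def IsBranchingValue (T : PhyloTree V) (k : ℕ) : Prop := ∃ d : ℝ, 0 ≤ d ∧ T.ccount d = k

/-- the branching distance `d_k = min {d : c(d) = k}`. -/
def branchDist (T : PhyloTree V) (k : ℕ) : ℝ := sInf {d | 0 ≤ d ∧ T.ccount d = k}

/-- `k⁻`: the largest branching value `≤ k`. -/
def kminus (T : PhyloTree V) (k : ℕ) : ℕ := sSup {j | j ≤ k ∧ T.IsBranchingValue j}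

/-- `k⁺`: the smallest branching value `≥ k`. -/
def kplus (T : PhyloTree V) (k : ℕ) : ℕ := sInf {j | k ≤ j ∧ T.IsBranchingValue j}

/-- `A` is a size-`k` maxPD set. -/
def IsMaxPD (T : PhyloTree V) (k : ℕ) (A : Set V) : Prop :=
  A ⊆ T.leaves ∧ A.ncard = k ∧ ∀ Y ⊆ T.leaves, Y.ncard = k → T.PD Y ≤ T.PD A

/-- `A` is a size-`k` minPD set. -/
def IsMinPD (T : PhyloTree V) (k : ℕ) (A : Set V) : Prop :=
  A ⊆ T.leaves ∧ A.ncard = k ∧ ∀ Y ⊆ T.leaves, Y.ncard = k → T.PD A ≤ T.PD Y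

/-- `m T k`: the number of size-`k` maxPD sets of `T`. -/
def m (T : PhyloTree V) (k : ℕ) : ℕ := {A : Set V | T.IsMaxPD k A}.ncard

/-- `T` is binary: every non-leaf vertex has exactly two children. -/
def Binary (T : PhyloTree V) : Prop :=
  ∀ v, ¬ T.IsLeaf v → Set.ncard {u | T.parent u = some v} = 2

end PhyloTree

namespace PhyloTree

variable {V : Type} [Fintype V] [DecidableEq V]

/-- a perfect unit-length tree of height `α`: a rooted binary phylogenetic tree
in which every edge has length `1` and every root-to-leaf path has exactly `α`
edges (so every leaf is at distance `α` from the root). -/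
def PerfectUnitLength (T : PhyloTree V) (α : ℕ) : Prop :=
  T.Binary ∧ (∀ v, v ≠ T.root → T.len v = 1) ∧ ∀ x, T.IsLeaf x → T.hgt x = (α : ℝ)

end PhyloTree

/-!
In a perfect unit-length tree of height `α`, the edges counted by `PD A` for a set `A` of
leaves are those into the ancestors of `A` at heights `1, …, α`, and at height `j` there are
at most `min (2 ^ j) #A` of them. A greedy choice of leaves attains all of these bounds at
once, so the size-`k` maxPD sets are exactly the sets attaining every bound.

For `p ≤ k ≤ 2p` with `p = 2 ^ (t - 1)` such a set is a choice of `k` vertices at height `t`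
covering all of height `t - 1`, followed by one leaf below each of them. The complement of the
chosen vertices contains at most one child of each vertex at height `t - 1`, whence
`m k = C(p, 2p - k) 2 ^ (2p - k) 2 ^ ((α - t) k)`. Replacing `k` by `k + p` moves one height up
and does not decrease this count, so the maximum is attained at `t = α`, where
`m k = f (n - k)` with `f j = C(n/2, j) 2 ^ j`. Since `(j + 1) f (j + 1) = 2 (n/2 - j) f j`,
`f` is unimodal with its peak at `j = ⌈n/3⌉`, i.e. `k = ⌊2n/3⌋`, and a tie with `j - 1`
exactly when `n ≡ 1 [MOD 3]`.
-/

namespace Finset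

variable {α β : Type*} [DecidableEq α] [DecidableEq β]

theorem card_filter_injOn_and_image_eq (f : α → β) (U : Finset α) (S : Finset β) :
    #(U.powerset.filter fun A : Finset α => Set.InjOn f (A : Set α) ∧ A.image f = S) =
      ∏ s ∈ S, #{x ∈ U | f x = s} := by
  rw [← card_pi]
  have hfg : ∀ g ∈ S.pi (fun s => {x ∈ U | f x = s}), ∀ s (hs : s ∈ S),
      g s hs ∈ U ∧ f (g s hs) = s := fun g hg s hs => mem_filter.1 (mem_pi.1 hg s hs)
  refine (card_bij (fun g _ => S.attach.image fun s => g s.1 s.2 :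
    ∀ g ∈ S.pi (fun s => {x ∈ U | f x = s}), Finset α) (fun g hg => ?_)
    (fun g hg g' hg' h => ?_) (fun A hA => ?_)).symm
  · simp only [mem_filter, mem_powerset]
    refine ⟨fun x hx => ?_, ?_, ?_⟩
    · obtain ⟨s, -, rfl⟩ := mem_image.1 hx
      exact (hfg g hg s.1 s.2).1
    · rintro _ hx _ hy hxy
      obtain ⟨s, -, rfl⟩ := mem_image.1 (mem_coe.1 hx)
      obtain ⟨s', -, rfl⟩ := mem_image.1 (mem_coe.1 hy)
      have : s = s' := Subtype.ext <| by
        rw [← (hfg g hg s.1 s.2).2, ← (hfg g hg s'.1 s'.2).2, hxy]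
      subst this
      rfl
    · ext s
      simp only [image_image, mem_image, mem_attach, true_and, Function.comp_apply]
      refine ⟨fun ⟨s', hs'⟩ => ?_, fun hs => ⟨⟨s, hs⟩, (hfg g hg s hs).2⟩⟩
      rw [← hs', (hfg g hg s'.1 s'.2).2]
      exact s'.2
  · funext s hs
    have hmem : g s hs ∈ S.attach.image fun s => g' s.1 s.2 :=
      h ▸ mem_image_of_mem _ (mem_attach S ⟨s, hs⟩)
    obtain ⟨⟨s', hs'⟩, -, hgs⟩ := mem_image.1 hmem
    have : s' = s := by rw [← (hfg g' hg' s' hs').2, hgs, (hfg g hg s hs).2]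
    subst this
    exact hgs.symm
  · simp only [mem_filter, mem_powerset] at hA
    obtain ⟨hAU, hinj, rfl⟩ := hA
    choose g hgA hgf using fun s (hs : s ∈ A.image f) => mem_image.1 hs
    refine ⟨g, mem_pi.2 fun s hs => mem_filter.2 ⟨hAU (hgA s hs), hgf s hs⟩, ?_⟩
    ext x
    simp only [mem_image, mem_attach, true_and]
    refine ⟨fun ⟨s, hs⟩ => hs ▸ hgA s.1 s.2,
      fun hx => ⟨⟨f x, mem_image_of_mem f hx⟩, ?_⟩⟩
    exact hinj (hgA _ _) hx (hgf _ _)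

theorem card_filter_injOn_and_image_mem (f : α → β) (U : Finset α)
    (𝒮 : Finset (Finset β)) :
    #(U.powerset.filter fun A : Finset α => Set.InjOn f (A : Set α) ∧ A.image f ∈ 𝒮) =
      ∑ S ∈ 𝒮, ∏ s ∈ S, #{x ∈ U | f x = s} := by
  rw [card_eq_sum_card_fiberwise (f := fun A => A.image f) (t := 𝒮)
    fun A hA => (mem_filter.1 hA).2.2]
  refine sum_congr rfl fun S hS => ?_
  rw [← card_filter_injOn_and_image_eq, filter_filter]
  congr 1
  refine filter_congr fun A _ => ?_
  constructor
  · exact fun ⟨⟨hinj, _⟩, h⟩ => ⟨hinj, h⟩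
  · rintro ⟨hinj, rfl⟩
    exact ⟨⟨hinj, hS⟩, rfl⟩

theorem card_filter_injOn_and_card_eq {c : ℕ} (f : α → β) (U : Finset α)
    (hc : ∀ b ∈ U.image f, #{x ∈ U | f x = b} = c) (r : ℕ) :
    #(U.powerset.filter fun A : Finset α => Set.InjOn f (A : Set α) ∧ #A = r) =
      (#(U.image f)).choose r * c ^ r := by
  have h : (U.powerset.filter fun A : Finset α => Set.InjOn f (A : Set α) ∧ #A = r) =
      U.powerset.filter fun A : Finset α =>
        Set.InjOn f (A : Set α) ∧ A.image f ∈ (U.image f).powersetCard r := by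
    refine filter_congr fun A hA => and_congr_right fun hinj => ?_
    rw [mem_powersetCard, card_image_of_injOn hinj]
    exact ⟨fun h => ⟨image_subset_image (mem_powerset.1 hA), h⟩, And.right⟩
  rw [h, card_filter_injOn_and_image_mem, ← card_powersetCard]
  rw [sum_congr rfl fun S hS => ?_, sum_const, smul_eq_mul]
  rw [mem_powersetCard] at hS
  rw [prod_congr rfl fun s hs => hc s (hS.1 hs), prod_const, hS.2]

theorem image_eq_image_iff_injOn_sdiff {f : α → β} {U S : Finset α}
    (h2 : ∀ b ∈ U.image f, #{x ∈ U | f x = b} = 2) (hS : S ⊆ U) :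
    S.image f = U.image f ↔ Set.InjOn f ↑(U \ S) := by
  constructor
  · intro h x hx y hy hxy
    simp only [coe_sdiff, Set.mem_sdiff, mem_coe] at hx hy
    by_contra hne
    have hb : f x ∈ U.image f := mem_image_of_mem f hx.1
    obtain ⟨z, hzS, hzx⟩ := mem_image.1 (h ▸ hb)
    have hfib : ({x, y} : Finset α) = {w ∈ U | f w = f x} := by
      refine eq_of_subset_of_card_le (fun w hw => ?_) (by rw [h2 _ hb, card_pair hne])
      rcases mem_insert.1 hw with rfl | hw
      · exact mem_filter.2 ⟨hx.1, rfl⟩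
      · rw [mem_singleton.1 hw]
        exact mem_filter.2 ⟨hy.1, hxy.symm⟩
    have hz : z ∈ ({x, y} : Finset α) := hfib ▸ mem_filter.2 ⟨hS hzS, hzx⟩
    rcases mem_insert.1 hz with rfl | hz
    · exact hx.2 hzS
    · exact hy.2 (mem_singleton.1 hz ▸ hzS)
  · intro hinj
    refine (image_subset_image hS).antisymm fun b hb => ?_
    obtain ⟨x, y, hne, hxy⟩ := card_eq_two.1 (h2 b hb)
    have hx : x ∈ U ∧ f x = b := mem_filter.1 (hxy ▸ mem_insert_self x {y})
    have hy : y ∈ U ∧ f y = b := mem_filter.1 (hxy ▸ mem_insert_of_mem (mem_singleton_self y))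
    by_cases hxS : x ∈ S
    · exact mem_image.2 ⟨x, hxS, hx.2⟩
    by_cases hyS : y ∈ S
    · exact mem_image.2 ⟨y, hyS, hy.2⟩
    exact absurd (hinj (by simp [hx.1, hxS]) (by simp [hy.1, hyS]) (hx.2.trans hy.2.symm)) hne

theorem card_filter_image_eq_eq_card_filter_injOn {f : α → β} {U : Finset α}
    (h2 : ∀ b ∈ U.image f, #{x ∈ U | f x = b} = 2) {k : ℕ} (hk : k ≤ #U) :
    #(U.powerset.filter fun S => #S = k ∧ S.image f = U.image f) =
      #(U.powerset.filter fun R : Finset α => Set.InjOn f (R : Set α) ∧ #R = #U - k) := by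
  refine card_nbij' (U \ ·) (U \ ·) (fun S hS => ?_) (fun R hR => ?_) (fun S hS => ?_)
    (fun R hR => ?_)
  · simp only [coe_filter, mem_powerset, Set.mem_ofPred_eq] at hS ⊢
    rw [← image_eq_image_iff_injOn_sdiff h2 hS.1, card_sdiff_of_subset hS.1, hS.2.1]
    exact ⟨sdiff_subset, hS.2.2, rfl⟩
  · simp only [coe_filter, mem_powerset, Set.mem_ofPred_eq] at hR ⊢
    rw [image_eq_image_iff_injOn_sdiff h2 sdiff_subset, sdiff_sdiff_eq_self hR.1,
      card_sdiff_of_subset hR.1, hR.2.2]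
    exact ⟨sdiff_subset, by omega, hR.2.1⟩
  · exact sdiff_sdiff_eq_self (mem_powerset.1 (mem_filter.1 hS).1)
  · exact sdiff_sdiff_eq_self (mem_powerset.1 (mem_filter.1 hR).1)

end Finset

namespace Nat

theorem choose_mul_two_pow_succ (p j : ℕ) :
    p.choose (j + 1) * 2 ^ (j + 1) * (j + 1) = p.choose j * 2 ^ j * (2 * (p - j)) := by
  rw [mul_right_comm, choose_succ_right_eq]
  ring

theorem choose_mul_two_pow_le_choose_two_mul (p a : ℕ) :
    p.choose a * 2 ^ a ≤ (2 * p).choose a := by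
  induction a with
  | zero => simp
  | succ a ih =>
    refine Nat.le_of_mul_le_mul_right ?_ a.succ_pos
    calc p.choose (a + 1) * 2 ^ (a + 1) * (a + 1) = p.choose a * 2 ^ a * (2 * (p - a)) :=
          choose_mul_two_pow_succ p a
      _ ≤ (2 * p).choose a * (2 * p - a) := Nat.mul_le_mul ih (by omega)
      _ = (2 * p).choose (a + 1) * (a + 1) := (choose_succ_right_eq _ _).symm

theorem choose_mul_two_pow_le (p j : ℕ) :
    p.choose j * 2 ^ j ≤ p.choose ((2 * p + 2) / 3) * 2 ^ ((2 * p + 2) / 3) := by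
  set f := fun j => p.choose j * 2 ^ j
  have hstep : ∀ j, f (j + 1) * (j + 1) = f j * (2 * (p - j)) := choose_mul_two_pow_succ p
  change f j ≤ f ((2 * p + 2) / 3)
  rcases le_total j ((2 * p + 2) / 3) with h | h
  · refine monotoneOn_of_le_add_one (f := f) Set.ordConnected_Iic (fun a _ _ ha => ?_)
      (Set.mem_Iic.2 h) Set.self_mem_Iic h
    refine Nat.le_of_mul_le_mul_right ?_ a.succ_pos
    rw [hstep]
    exact Nat.mul_le_mul_left _ (by rw [Set.mem_Iic] at ha; omega)
  · refine antitoneOn_of_add_one_le (f := f) Set.ordConnected_Ici (fun a _ ha _ => ?_)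
      Set.self_mem_Ici (Set.mem_Ici.2 h) h
    refine Nat.le_of_mul_le_mul_right ?_ a.succ_pos
    rw [hstep]
    exact Nat.mul_le_mul_left _ (by rw [Set.mem_Ici] at ha; omega)

theorem choose_mul_two_pow_pred_eq (p : ℕ) (h : 2 * p % 3 = 1) :
    p.choose ((2 * p + 2) / 3 - 1) * 2 ^ ((2 * p + 2) / 3 - 1) =
      p.choose ((2 * p + 2) / 3) * 2 ^ ((2 * p + 2) / 3) := by
  obtain ⟨q, hq⟩ : ∃ q, (2 * p + 2) / 3 = q + 1 := ⟨(2 * p + 2) / 3 - 1, by omega⟩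
  rw [hq, Nat.add_sub_cancel]
  refine Nat.eq_of_mul_eq_mul_right q.succ_pos ?_
  rw [choose_mul_two_pow_succ]
  congr 1
  omega

/-- The count `m` at height `t` with `k = 2p - r` and `α - t = s + 1` is at most the count at
height `t + 1` with `k + p`. -/
theorem choose_mul_two_pow_mul_le (p r s : ℕ) (hr : r ≤ p) :
    p.choose r * 2 ^ r * 2 ^ ((s + 1) * (2 * p - r)) ≤
      (2 * p).choose (p + r) * 2 ^ (p + r) * 2 ^ (s * (3 * p - r)) := by
  have hexp : r + (s + 1) * (2 * p - r) = (p - r) + (p + r) + s * (2 * p - r) := by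
    rw [add_mul, one_mul]
    omega
  calc p.choose r * 2 ^ r * 2 ^ ((s + 1) * (2 * p - r))
      = p.choose (p - r) * 2 ^ (p - r) * 2 ^ (p + r) * 2 ^ (s * (2 * p - r)) := by
        rw [choose_symm hr, mul_assoc, ← pow_add, hexp, pow_add, pow_add]
        ring
    _ ≤ (2 * p).choose (p - r) * 2 ^ (p + r) * 2 ^ (s * (3 * p - r)) := by
        gcongr
        · exact choose_mul_two_pow_le_choose_two_mul p (p - r)
        · norm_num
        · omega
    _ = (2 * p).choose (p + r) * 2 ^ (p + r) * 2 ^ (s * (3 * p - r)) := by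
        rw [choose_symm_of_eq_add (by omega : 2 * p = (p - r) + (p + r))]


theorem exists_two_pow_pred_le_le_two_pow {k α : ℕ} (hk1 : 1 ≤ k) (hα : 1 ≤ α)
    (hk2 : k ≤ 2 ^ α) : ∃ t, 1 ≤ t ∧ t ≤ α ∧ 2 ^ (t - 1) ≤ k ∧ k ≤ 2 ^ t := by
  induction α, hα using Nat.le_induction with
  | base => exact ⟨1, le_rfl, le_rfl, by simpa using hk1, by simpa using hk2⟩
  | succ α hα ih =>
    rcases le_or_gt k (2 ^ α) with h | h
    · obtain ⟨t, ht1, htα, ht⟩ := ih h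
      exact ⟨t, ht1, by omega, ht⟩
    · exact ⟨α + 1, by omega, le_rfl, by simpa using h.le, hk2⟩

end Nat

namespace PhyloTree

open Finset

variable {V : Type} [Fintype V] [DecidableEq V] {T : PhyloTree V} {α : ℕ}

theorem anc_refl (v : V) : T.anc v v := Relation.ReflTransGen.refl

theorem anc_of_parent_eq {u v : V} (h : T.parent v = some u) : T.anc u v :=
  Relation.ReflTransGen.single h

theorem anc.trans {u v w : V} (huv : T.anc u v) (hvw : T.anc v w) : T.anc u w :=
  Relation.ReflTransGen.trans hvw huv

theorem anc_root (v : V) : T.anc T.root v := T.reaches_root v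

theorem ne_root_of_parent_eq {u v : V} (h : T.parent v = some u) : v ≠ T.root := by
  rintro rfl
  simp [T.parent_root] at h

theorem hgt_lt_of_parent_eq {u v : V} (h : T.parent v = some u) : T.hgt u < T.hgt v := by
  rw [T.hgt_eq v u h]
  linarith [T.len_pos v (ne_root_of_parent_eq h)]

theorem hgt_le_of_anc {u v : V} (h : T.anc u v) : T.hgt u ≤ T.hgt v := by
  induction h with
  | refl => exact le_rfl
  | tail _ hbc ih => exact (hgt_lt_of_parent_eq hbc).le.trans ih

theorem eq_of_anc_of_hgt_le {u v : V} (h : T.anc u v) (hle : T.hgt v ≤ T.hgt u) : u = v := by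
  rcases Relation.ReflTransGen.cases_tail h with rfl | ⟨c, hvc, hcu⟩
  · rfl
  · exact absurd hle (not_le.2 ((hgt_lt_of_parent_eq hcu).trans_le (hgt_le_of_anc hvc)))

theorem anc_total {u w x : V} (hu : T.anc u x) (hw : T.anc w x) : T.anc u w ∨ T.anc w u := by
  induction hw with
  | refl => exact Or.inl hu
  | @tail b c _ hbc ih =>
    rcases ih with hub | hbu
    · rcases Relation.ReflTransGen.cases_head hub with rfl | ⟨d, hbd, hdu⟩
      · exact Or.inr (anc_of_parent_eq hbc)
      · have hdc : d = c := Option.some_injective _ (hbd.symm.trans hbc)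
        exact Or.inl (hdc ▸ hdu)
    · exact Or.inr ((anc_of_parent_eq hbc).trans hbu)

theorem eq_of_anc_of_anc_of_hgt_eq {u w x : V} (hu : T.anc u x) (hw : T.anc w x)
    (h : T.hgt u = T.hgt w) : u = w := by
  rcases anc_total hu hw with huw | hwu
  · exact eq_of_anc_of_hgt_le huw h.ge
  · exact (eq_of_anc_of_hgt_le hwu h.le).symm

theorem exists_isLeaf_anc (v : V) : ∃ x, T.IsLeaf x ∧ T.anc v x := by
  obtain ⟨x, hx, hmax⟩ := (univ.filter (T.anc v)).exists_max_image T.hgt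
    ⟨v, mem_filter.2 ⟨mem_univ v, anc_refl v⟩⟩
  have hvx := (mem_filter.1 hx).2
  refine ⟨x, fun c hc => ?_, hvx⟩
  have := hmax c (mem_filter.2 ⟨mem_univ c, hvx.trans (anc_of_parent_eq hc)⟩)
  exact (hgt_lt_of_parent_eq hc).not_ge this

theorem m_eq_one_of_forall_eq {k : ℕ} {B : Set V} (hB : B ⊆ T.leaves) (hBk : B.ncard = k)
    (h : ∀ Y ⊆ T.leaves, Y.ncard = k → Y = B) : T.m k = 1 := by
  rw [m, Set.ncard_eq_one]
  refine ⟨B, Set.ext fun A => ⟨fun hA => h A hA.1 hA.2.1, ?_⟩⟩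
  rintro rfl
  exact ⟨hB, hBk, fun Y hY hYk => (congrArg T.PD (h Y hY hYk)).le⟩

theorem m_zero (T : PhyloTree V) : T.m 0 = 1 :=
  m_eq_one_of_forall_eq (Set.empty_subset _) (Set.ncard_empty V)
    fun Y _ hY => (Set.ncard_eq_zero Y.toFinite).1 hY

theorem m_ncard_leaves (T : PhyloTree V) : T.m T.leaves.ncard = 1 :=
  m_eq_one_of_forall_eq subset_rfl rfl
    fun _ hY hYk => Set.eq_of_subset_of_ncard_le hY hYk.ge T.leaves.toFinite

def level (T : PhyloTree V) (j : ℕ) : Finset V := univ.filter fun v => T.hgt v = j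

/-- Junk value `x` when `x` has no ancestor at height `j`. -/
def ancAt (T : PhyloTree V) (j : ℕ) (x : V) : V :=
  if h : ∃ u, T.anc u x ∧ T.hgt u = j then h.choose else x

@[simp]
theorem mem_level {v : V} {j : ℕ} : v ∈ T.level j ↔ T.hgt v = j := by simp [level]

theorem level_zero : T.level 0 = {T.root} := by
  ext v
  rw [mem_level, mem_singleton, Nat.cast_zero]
  refine ⟨fun hv => (eq_of_anc_of_hgt_le (anc_root v) (by rw [hv, T.hgt_root])).symm, ?_⟩
  rintro rfl
  exact T.hgt_root

theorem ne_root_of_mem_level_succ {v : V} {j : ℕ} (hv : v ∈ T.level (j + 1)) :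
    v ≠ T.root := by
  rintro rfl
  rw [mem_level, T.hgt_root] at hv
  exact absurd hv (by positivity)

theorem disjoint_level {i j : ℕ} (h : i ≠ j) : Disjoint (T.level i) (T.level j) :=
  disjoint_left.2 fun v hi hj => h (by exact_mod_cast (mem_level.1 hi).symm.trans (mem_level.1 hj))

theorem ancAt_eq {u x : V} {j : ℕ} (h : T.anc u x) (hu : T.hgt u = j) : T.ancAt j x = u := by
  have hex : ∃ u, T.anc u x ∧ T.hgt u = j := ⟨u, h, hu⟩
  rw [ancAt, dif_pos hex]
  exact eq_of_anc_of_anc_of_hgt_eq hex.choose_spec.1 h (hex.choose_spec.2.trans hu.symm)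

theorem ancAt_of_mem_level {x : V} {j : ℕ} (hx : x ∈ T.level j) : T.ancAt j x = x :=
  ancAt_eq (anc_refl x) (mem_level.1 hx)

theorem hgt_eq_hgt_add_one (hlen : ∀ v, v ≠ T.root → T.len v = 1) {u v : V}
    (h : T.parent v = some u) : T.hgt v = T.hgt u + 1 := by
  rw [T.hgt_eq v u h, hlen v (ne_root_of_parent_eq h)]

theorem exists_mem_level (hlen : ∀ v, v ≠ T.root → T.len v = 1) (v : V) :
    ∃ n, v ∈ T.level n := by
  refine Relation.ReflTransGen.head_induction_on (T.reaches_root v) ⟨0, by simp [T.hgt_root]⟩ ?_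
  rintro a b hab - ⟨n, hn⟩
  refine ⟨n + 1, ?_⟩
  rw [mem_level] at hn ⊢
  rw [hgt_eq_hgt_add_one hlen hab, hn]
  push_cast
  ring

theorem exists_parent_mem_level (hlen : ∀ v, v ≠ T.root → T.len v = 1) {v : V} {j : ℕ}
    (hv : v ∈ T.level (j + 1)) : ∃ w ∈ T.level j, T.parent v = some w := by
  obtain ⟨w, hw⟩ :=
    Option.isSome_iff_exists.1 (T.parent_isSome v (ne_root_of_mem_level_succ hv))
  refine ⟨w, ?_, hw⟩
  rw [mem_level, hgt_eq_hgt_add_one hlen hw] at hv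
  push_cast at hv
  rw [mem_level]
  linarith

theorem exists_anc_mem_level (hlen : ∀ v, v ≠ T.root → T.len v = 1) {x : V} {i j : ℕ}
    (hx : x ∈ T.level i) (hji : j ≤ i) : ∃ u ∈ T.level j, T.anc u x := by
  induction i generalizing x with
  | zero => exact ⟨x, Nat.le_zero.1 hji ▸ hx, anc_refl x⟩
  | succ i ih =>
    rcases hji.eq_or_lt with rfl | hji
    · exact ⟨x, hx, anc_refl x⟩
    obtain ⟨w, hw, hxw⟩ := exists_parent_mem_level hlen hx
    obtain ⟨u, hu, huw⟩ := ih hw (Nat.lt_succ_iff.1 hji)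
    exact ⟨u, hu, huw.trans (anc_of_parent_eq hxw)⟩

theorem ancAt_mem_level (hlen : ∀ v, v ≠ T.root → T.len v = 1) {x : V} {i j : ℕ}
    (hx : x ∈ T.level i) (hji : j ≤ i) : T.ancAt j x ∈ T.level j := by
  obtain ⟨u, hu, hux⟩ := exists_anc_mem_level hlen hx hji
  rwa [ancAt_eq hux (mem_level.1 hu)]

theorem anc_ancAt (hlen : ∀ v, v ≠ T.root → T.len v = 1) {x : V} {i j : ℕ}
    (hx : x ∈ T.level i) (hji : j ≤ i) : T.anc (T.ancAt j x) x := by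
  obtain ⟨u, hu, hux⟩ := exists_anc_mem_level hlen hx hji
  rwa [ancAt_eq hux (mem_level.1 hu)]

theorem ancAt_ancAt (hlen : ∀ v, v ≠ T.root → T.len v = 1) {x : V} {i j l : ℕ}
    (hx : x ∈ T.level l) (hij : i ≤ j) (hjl : j ≤ l) :
    T.ancAt i (T.ancAt j x) = T.ancAt i x := by
  have hj := ancAt_mem_level hlen hx hjl
  exact (ancAt_eq ((anc_ancAt hlen hj hij).trans (anc_ancAt hlen hx hjl))
    (mem_level.1 (ancAt_mem_level hlen hj hij))).symm

theorem hgt_le (hT : T.PerfectUnitLength α) (v : V) : T.hgt v ≤ α := by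
  obtain ⟨x, hx, hvx⟩ := exists_isLeaf_anc (T := T) v
  exact (hgt_le_of_anc hvx).trans (hT.2.2 x hx).le

theorem isLeaf_iff_mem_level (hT : T.PerfectUnitLength α) {v : V} :
    T.IsLeaf v ↔ v ∈ T.level α := by
  refine ⟨fun hv => mem_level.2 (hT.2.2 v hv), fun hv c hc => ?_⟩
  have := hgt_le hT c
  rw [hgt_eq_hgt_add_one hT.2.1 hc, mem_level.1 hv] at this
  linarith

theorem leaves_eq (hT : T.PerfectUnitLength α) : T.leaves = T.level α :=
  Set.ext fun _ => isLeaf_iff_mem_level hT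

theorem image_ancAt_level (hT : T.PerfectUnitLength α) {i j : ℕ} (hij : i ≤ j)
    (hj : j ≤ α) :
    (T.level j).image (T.ancAt i) = T.level i := by
  refine subset_antisymm (fun v hv => ?_) fun v hv => ?_
  · obtain ⟨u, hu, rfl⟩ := mem_image.1 hv
    exact ancAt_mem_level hT.2.1 hu hij
  · obtain ⟨x, hx, hvx⟩ := exists_isLeaf_anc (T := T) v
    rw [isLeaf_iff_mem_level hT] at hx
    exact mem_image.2 ⟨T.ancAt j x, ancAt_mem_level hT.2.1 hx hj,
      (ancAt_ancAt hT.2.1 hx hij hj).trans (ancAt_eq hvx (mem_level.1 hv))⟩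

theorem card_filter_ancAt_succ (hT : T.PerfectUnitLength α) {w : V} {j : ℕ} (hj : j < α)
    (hw : w ∈ T.level j) : #{u ∈ T.level (j + 1) | T.ancAt j u = w} = 2 := by
  have hchildren : (({u ∈ T.level (j + 1) | T.ancAt j u = w} : Finset V) : Set V) =
      {u | T.parent u = some w} := by
    ext u
    simp only [coe_filter, Set.mem_ofPred_eq]
    constructor
    · rintro ⟨hu, hwu⟩
      obtain ⟨p, hp, hup⟩ := exists_parent_mem_level hT.2.1 hu
      rwa [← hwu, ancAt_eq (anc_of_parent_eq hup) (mem_level.1 hp)]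
    · intro hu
      refine ⟨?_, ancAt_eq (anc_of_parent_eq hu) (mem_level.1 hw)⟩
      rw [mem_level, hgt_eq_hgt_add_one hT.2.1 hu, mem_level.1 hw]
      push_cast
      ring
  have hleaf : ¬ T.IsLeaf w := by
    rw [isLeaf_iff_mem_level hT, mem_level, mem_level.1 hw]
    exact_mod_cast hj.ne
  rw [← Set.ncard_coe_finset, hchildren, hT.1 w hleaf]

theorem card_filter_ancAt (hT : T.PerfectUnitLength α) {v : V} {i j : ℕ} (hij : i ≤ j)
    (hj : j ≤ α) (hv : v ∈ T.level i) :
    #{x ∈ T.level j | T.ancAt i x = v} = 2 ^ (j - i) := by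
  induction j, hij using Nat.le_induction with
  | base =>
    have hfix : {x ∈ T.level i | T.ancAt i x = v} = {x ∈ T.level i | x = v} :=
      filter_congr fun x hx => by rw [ancAt_of_mem_level hx]
    rw [hfix, filter_eq', if_pos hv, card_singleton, Nat.sub_self, pow_zero]
  | succ j hij ih =>
    rw [card_eq_sum_card_fiberwise (f := T.ancAt j) (t := {u ∈ T.level j | T.ancAt i u = v})]
    · rw [sum_congr rfl fun u hu => ?_, sum_const, smul_eq_mul, ih (by omega),
        Nat.sub_add_comm hij, pow_succ]
      rw [mem_filter] at hu
      have hfib : {x ∈ {x ∈ T.level (j + 1) | T.ancAt i x = v} | T.ancAt j x = u} =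
          {x ∈ T.level (j + 1) | T.ancAt j x = u} := by
        rw [filter_filter]
        refine filter_congr fun x hx => ⟨And.right, fun hxu => ⟨?_, hxu⟩⟩
        rw [← ancAt_ancAt hT.2.1 hx hij (by omega), hxu, hu.2]
      rw [hfib, card_filter_ancAt_succ hT (by omega) hu.1]
    · intro x hx
      rw [mem_coe, mem_filter] at hx ⊢
      exact ⟨ancAt_mem_level hT.2.1 hx.1 (by omega),
        (ancAt_ancAt hT.2.1 hx.1 hij (by omega)).trans hx.2⟩

theorem card_level (hT : T.PerfectUnitLength α) {j : ℕ} (hj : j ≤ α) :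
    #(T.level j) = 2 ^ j := by
  have hroot : T.root ∈ T.level 0 := by simp [level_zero]
  have h := card_filter_ancAt hT (Nat.zero_le j) hj hroot
  rw [Nat.sub_zero] at h
  rw [← h]
  congr 1
  refine (filter_true_of_mem fun x hx => ?_).symm
  simpa [level_zero] using ancAt_mem_level hT.2.1 hx (Nat.zero_le j)

theorem image_ancAt_subset_level (hT : T.PerfectUnitLength α) {A : Finset V}
    (hA : A ⊆ T.level α) {j : ℕ} (hj : j ≤ α) : A.image (T.ancAt j) ⊆ T.level j :=
  image_subset_iff.2 fun _ hx => ancAt_mem_level hT.2.1 (hA hx) hj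

theorem image_image_ancAt (hT : T.PerfectUnitLength α) {A : Finset V} (hA : A ⊆ T.level α)
    {i j : ℕ} (hij : i ≤ j) (hj : j ≤ α) :
    (A.image (T.ancAt j)).image (T.ancAt i) = A.image (T.ancAt i) := by
  rw [image_image]
  exact image_congr fun x hx => ancAt_ancAt hT.2.1 (hA hx) hij hj

theorem injOn_ancAt_of_le (hT : T.PerfectUnitLength α) {A : Finset V} (hA : A ⊆ T.level α)
    {i j : ℕ} (hij : i ≤ j) (hj : j ≤ α) (h : Set.InjOn (T.ancAt i) ↑A) :
    Set.InjOn (T.ancAt j) ↑A := fun x hx y hy hxy =>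
  h hx hy (by rw [← ancAt_ancAt hT.2.1 (hA hx) hij hj, hxy, ancAt_ancAt hT.2.1 (hA hy) hij hj])

theorem ne_root_and_exists_anc_iff (hT : T.PerfectUnitLength α) {A : Finset V}
    (hA : A ⊆ T.level α) (v : V) :
    (v ≠ T.root ∧ ∃ x ∈ (A : Set V), T.IsLeaf x ∧ T.anc v x) ↔
      v ∈ (Icc 1 α).biUnion fun j => A.image (T.ancAt j) := by
  simp only [mem_biUnion, mem_Icc, mem_image, mem_coe]
  constructor
  · rintro ⟨hroot, x, hxA, -, hvx⟩
    obtain ⟨n, hn⟩ := exists_mem_level hT.2.1 v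
    have hn0 : n ≠ 0 := by
      rintro rfl
      exact hroot (by simpa [level_zero] using hn)
    have hnα : n ≤ α := by exact_mod_cast (mem_level.1 hn).symm.trans_le (hgt_le hT v)
    exact ⟨n, ⟨Nat.one_le_iff_ne_zero.2 hn0, hnα⟩, x, hxA, ancAt_eq hvx (mem_level.1 hn)⟩
  · rintro ⟨j, ⟨hj1, hjα⟩, x, hxA, rfl⟩
    have hx := hA hxA
    refine ⟨fun hroot => ?_, x, hxA, (isLeaf_iff_mem_level hT).2 hx, anc_ancAt hT.2.1 hx hjα⟩
    have hj := ancAt_mem_level hT.2.1 hx hjα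
    rw [hroot, ← Nat.succ_pred_eq_of_pos hj1] at hj
    exact ne_root_of_mem_level_succ hj rfl

theorem PD_coe_eq_sum_card_image (hT : T.PerfectUnitLength α) {A : Finset V}
    (hA : A ⊆ T.level α) :
    T.PD ↑A = ((∑ j ∈ Icc 1 α, #(A.image (T.ancAt j)) : ℕ) : ℝ) := by
  set B := (Icc 1 α).biUnion fun j => A.image (T.ancAt j)
  have hdisj : Set.PairwiseDisjoint ↑(Icc 1 α) fun j => A.image (T.ancAt j) := by
    intro i hi j hj hij
    exact (disjoint_level hij).mono (image_ancAt_subset_level hT hA (mem_Icc.1 hi).2)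
      (image_ancAt_subset_level hT hA (mem_Icc.1 hj).2)
  unfold PD
  calc _ = ∑ v, if v ∈ B then (1 : ℝ) else 0 := by
        refine sum_congr rfl fun v _ => ?_
        by_cases hv : v ≠ T.root ∧ ∃ x ∈ (A : Set V), T.IsLeaf x ∧ T.anc v x
        · rw [if_pos hv, if_pos ((ne_root_and_exists_anc_iff hT hA v).1 hv), hT.2.1 v hv.1]
        · rw [if_neg hv, if_neg (mt (ne_root_and_exists_anc_iff hT hA v).2 hv)]
    _ = #B := by rw [sum_boole, filter_mem_eq_inter, univ_inter]
    _ = _ := by rw [card_biUnion hdisj]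

def IsOptimal (T : PhyloTree V) (α k : ℕ) (A : Finset V) : Prop :=
  A ⊆ T.level α ∧ #A = k ∧ ∀ j ∈ Icc 1 α, #(A.image (T.ancAt j)) = min (2 ^ j) k

theorem card_image_ancAt_le_min (hT : T.PerfectUnitLength α) {A : Finset V}
    (hA : A ⊆ T.level α) {j : ℕ} (hj : j ≤ α) : #(A.image (T.ancAt j)) ≤ min (2 ^ j) #A :=
  le_min ((card_le_card (image_ancAt_subset_level hT hA hj)).trans_eq (card_level hT hj))
    card_image_le

theorem PD_coe_le_sum_min (hT : T.PerfectUnitLength α) {A : Finset V} (hA : A ⊆ T.level α) :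
    T.PD ↑A ≤ ((∑ j ∈ Icc 1 α, min (2 ^ j) #A : ℕ) : ℝ) := by
  rw [PD_coe_eq_sum_card_image hT hA]
  exact_mod_cast sum_le_sum fun j hj => card_image_ancAt_le_min hT hA (mem_Icc.1 hj).2

theorem PD_coe_eq_sum_min (hT : T.PerfectUnitLength α) {k : ℕ} {A : Finset V}
    (hA : T.IsOptimal α k A) : T.PD ↑A = ((∑ j ∈ Icc 1 α, min (2 ^ j) k : ℕ) : ℝ) := by
  rw [PD_coe_eq_sum_card_image hT hA.1, sum_congr rfl hA.2.2]

theorem IsOptimal.exists_insert (hT : T.PerfectUnitLength α) {k : ℕ} {A : Finset V}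
    (hA : T.IsOptimal α k A) (hk : k < 2 ^ α) : ∃ x, T.IsOptimal α (k + 1) (insert x A) := by
  obtain ⟨hAα, hAk, hA⟩ := hA
  -- `t` is the least height with more than `k` vertices: a leaf below a vertex at height `t`
  -- that is not yet above `A` has a new ancestor at every height `≥ t`, while at the heights
  -- `< t` all vertices are already above `A`.
  have hex : ∃ t, k + 1 ≤ 2 ^ t := ⟨α, hk⟩
  set t := Nat.find hex
  have htα : t ≤ α := Nat.find_min' hex hk
  obtain ⟨v, hv, hvA⟩ : ∃ v ∈ T.level t, v ∉ A.image (T.ancAt t) := by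
    by_contra! h
    have := card_le_card h
    rw [card_level hT htα] at this
    have h1 : #(A.image (T.ancAt t)) ≤ #A := card_image_le
    have h2 : k + 1 ≤ 2 ^ t := Nat.find_spec hex
    omega
  rw [← image_ancAt_level hT htα le_rfl] at hv
  obtain ⟨x, hx, rfl⟩ := mem_image.1 hv
  have hxA : x ∉ A := fun hxA => hvA (mem_image_of_mem _ hxA)
  have hxAα : insert x A ⊆ T.level α := insert_subset hx hAα
  refine ⟨x, hxAα, by rw [card_insert_of_notMem hxA, hAk], fun j hj => ?_⟩
  obtain ⟨hj1, hjα⟩ := mem_Icc.1 hj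
  by_cases htj : t ≤ j
  · have hnew : T.ancAt j x ∉ A.image (T.ancAt j) := by
      intro h
      obtain ⟨a, ha, hax⟩ := mem_image.1 h
      apply hvA
      rw [← ancAt_ancAt hT.2.1 hx htj hjα, ← hax, ancAt_ancAt hT.2.1 (hAα ha) htj hjα]
      exact mem_image_of_mem _ ha
    have h2j : k + 1 ≤ 2 ^ j := (Nat.find_spec hex).trans (Nat.pow_le_pow_right two_pos htj)
    rw [image_insert, card_insert_of_notMem hnew, hA j hj, min_eq_right (by omega),
      min_eq_right h2j]
  · have h2j : 2 ^ j ≤ k := by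
      have := Nat.find_min hex (not_le.1 htj)
      omega
    refine le_antisymm ((card_image_ancAt_le_min hT hxAα hjα).trans (min_le_min_left _ ?_)) ?_
    · rw [card_insert_of_notMem hxA, hAk]
    · rw [min_eq_left (by omega), ← min_eq_left h2j, ← hA j hj]
      exact card_le_card (image_subset_image (subset_insert x A))

theorem exists_isOptimal (hT : T.PerfectUnitLength α) {k : ℕ} (hk : k ≤ 2 ^ α) :
    ∃ A, T.IsOptimal α k A := by
  induction k with
  | zero => exact ⟨∅, empty_subset _, card_empty, fun j _ => by simp⟩
  | succ k ih =>
    obtain ⟨A, hA⟩ := ih (by omega)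
    obtain ⟨x, hx⟩ := hA.exists_insert hT (by omega)
    exact ⟨_, hx⟩

theorem isMaxPD_coe_iff (hT : T.PerfectUnitLength α) {k : ℕ} (hk : k ≤ 2 ^ α) (A : Finset V) :
    T.IsMaxPD k ↑A ↔ T.IsOptimal α k A := by
  rw [IsMaxPD, leaves_eq hT, coe_subset, Set.ncard_coe_finset]
  obtain ⟨B, hB⟩ := exists_isOptimal hT hk
  constructor
  · rintro ⟨hA, hAk, hmax⟩
    refine ⟨hA, hAk, ?_⟩
    have hle : ∀ j ∈ Icc 1 α, #(A.image (T.ancAt j)) ≤ min (2 ^ j) k :=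
      fun j hj => hAk ▸ card_image_ancAt_le_min hT hA (mem_Icc.1 hj).2
    have hge := hmax ↑B (coe_subset.2 hB.1) (by rw [Set.ncard_coe_finset, hB.2.1])
    rw [PD_coe_eq_sum_min hT hB, PD_coe_eq_sum_card_image hT hA, Nat.cast_le] at hge
    exact (sum_eq_sum_iff_of_le hle).1 (le_antisymm (sum_le_sum hle) hge)
  · intro hA
    refine ⟨hA.1, hA.2.1, fun Y hY hYk => ?_⟩
    obtain ⟨C, rfl⟩ := Y.toFinite.exists_finset_coe
    rw [coe_subset] at hY
    rw [Set.ncard_coe_finset] at hYk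
    rw [PD_coe_eq_sum_min hT hA, ← hYk]
    exact PD_coe_le_sum_min hT hY

theorem m_eq_card_filter_isOptimal (hT : T.PerfectUnitLength α) {k : ℕ} (hk : k ≤ 2 ^ α) :
    T.m k = #(univ.filter (T.IsOptimal α k)) := by
  have h : {A : Set V | T.IsMaxPD k A} =
      (↑) '' (↑(univ.filter (T.IsOptimal α k)) : Set (Finset V)) := by
    ext A
    obtain ⟨B, rfl⟩ := A.toFinite.exists_finset_coe
    simp [isMaxPD_coe_iff hT hk]
  rw [m, h, Set.ncard_image_of_injective _ coe_injective, Set.ncard_coe_finset]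

theorem isOptimal_iff (hT : T.PerfectUnitLength α) {t k : ℕ} (ht1 : 1 ≤ t) (htα : t ≤ α)
    (hk1 : 2 ^ (t - 1) ≤ k) (hk2 : k ≤ 2 ^ t) (A : Finset V) :
    T.IsOptimal α k A ↔ A ⊆ T.level α ∧ Set.InjOn (T.ancAt t) ↑A ∧
      A.image (T.ancAt t) ∈ (T.level t).powerset.filter
        fun S => #S = k ∧ S.image (T.ancAt (t - 1)) = T.level (t - 1) := by
  simp only [mem_filter, mem_powerset]
  constructor
  · rintro ⟨hA, hAk, hopt⟩
    have hinj : Set.InjOn (T.ancAt t) ↑A := card_image_iff.1 <| by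
      rw [hopt t (mem_Icc.2 ⟨ht1, htα⟩), min_eq_right hk2, hAk]
    refine ⟨hA, hinj, image_ancAt_subset_level hT hA htα,
      by rw [card_image_of_injOn hinj, hAk], ?_⟩
    rw [image_image_ancAt hT hA (Nat.sub_le t 1) htα]
    refine eq_of_subset_of_card_le (image_ancAt_subset_level hT hA (by omega)) ?_
    rw [card_level hT (by omega)]
    rcases Nat.lt_or_ge t 2 with ht | ht
    · rw [show t - 1 = 0 by omega, pow_zero, Nat.one_le_iff_ne_zero, Ne, card_eq_zero,
        image_eq_empty, ← card_eq_zero, hAk]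
      have : 1 ≤ k := (Nat.one_le_two_pow).trans hk1
      omega
    · rw [hopt (t - 1) (mem_Icc.2 ⟨by omega, by omega⟩), min_eq_left hk1]
  · rintro ⟨hA, hinj, -, hSk, hS⟩
    rw [image_image_ancAt hT hA (Nat.sub_le t 1) htα] at hS
    have hAk : #A = k := by rwa [card_image_of_injOn hinj] at hSk
    refine ⟨hA, hAk, fun j hj => ?_⟩
    obtain ⟨hj1, hjα⟩ := mem_Icc.1 hj
    by_cases htj : t ≤ j
    · rw [card_image_of_injOn (injOn_ancAt_of_le hT hA htj hjα hinj), hAk,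
        min_eq_right (hk2.trans (Nat.pow_le_pow_right two_pos htj))]
    · rw [← image_image_ancAt hT hA (show j ≤ t - 1 by omega) (by omega), hS,
        image_ancAt_level hT (by omega) (by omega), card_level hT (by omega),
        min_eq_left ((Nat.pow_le_pow_right two_pos (by omega : j ≤ t - 1)).trans hk1)]

theorem m_eq_choose_mul_pow (hT : T.PerfectUnitLength α) {t k : ℕ} (ht1 : 1 ≤ t)
    (htα : t ≤ α) (hk1 : 2 ^ (t - 1) ≤ k) (hk2 : k ≤ 2 ^ t) :
    T.m k = (2 ^ (t - 1)).choose (2 ^ t - k) * 2 ^ (2 ^ t - k) * 2 ^ ((α - t) * k) := by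
  set 𝒮 := (T.level t).powerset.filter
    fun S => #S = k ∧ S.image (T.ancAt (t - 1)) = T.level (t - 1)
  have hopt : univ.filter (T.IsOptimal α k) = (T.level α).powerset.filter
      fun A : Finset V => Set.InjOn (T.ancAt t) ↑A ∧ A.image (T.ancAt t) ∈ 𝒮 := by
    ext A
    simp only [mem_filter, mem_univ, true_and, mem_powerset]
    exact isOptimal_iff hT ht1 htα hk1 hk2 A
  have hleaves : #((T.level α).powerset.filter
      fun A : Finset V => Set.InjOn (T.ancAt t) ↑A ∧ A.image (T.ancAt t) ∈ 𝒮) =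
      #𝒮 * 2 ^ ((α - t) * k) := by
    rw [card_filter_injOn_and_image_mem, sum_congr rfl fun S hS => ?_, sum_const, smul_eq_mul]
    simp only [𝒮, mem_filter, mem_powerset] at hS
    rw [prod_congr rfl fun s hs => card_filter_ancAt hT htα le_rfl (hS.1 hs), prod_const, hS.2.1,
      ← pow_mul]
  have hpairs : ∀ w ∈ (T.level t).image (T.ancAt (t - 1)),
      #{u ∈ T.level t | T.ancAt (t - 1) u = w} = 2 := by
    intro w hw
    rw [image_ancAt_level hT (Nat.sub_le t 1) htα] at hw
    have := card_filter_ancAt_succ hT (by omega : t - 1 < α) hw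
    rwa [Nat.sub_add_cancel ht1] at this
  have h𝒮 : #𝒮 = (2 ^ (t - 1)).choose (2 ^ t - k) * 2 ^ (2 ^ t - k) := by
    have h := card_filter_image_eq_eq_card_filter_injOn hpairs (k := k)
      (by rw [card_level hT htα]; exact hk2)
    rw [image_ancAt_level hT (Nat.sub_le t 1) htα] at h
    rw [h, card_filter_injOn_and_card_eq _ _ hpairs, image_ancAt_level hT (Nat.sub_le t 1) htα,
      card_level hT htα, card_level hT (by omega)]
  rw [m_eq_card_filter_isOptimal hT (hk2.trans (Nat.pow_le_pow_right two_pos htα)), hopt,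
    hleaves, h𝒮]

theorem m_eq_choose_mul_pow_top (hT : T.PerfectUnitLength α) (hα : 1 ≤ α) {k : ℕ}
    (hk1 : 2 ^ (α - 1) ≤ k) (hk2 : k ≤ 2 ^ α) :
    T.m k = (2 ^ (α - 1)).choose (2 ^ α - k) * 2 ^ (2 ^ α - k) := by
  rw [m_eq_choose_mul_pow hT hα le_rfl hk1 hk2, Nat.sub_self, zero_mul, pow_zero, mul_one]

theorem m_le_m_add (hT : T.PerfectUnitLength α) {t k : ℕ} (ht1 : 1 ≤ t) (ht : t < α)
    (hk1 : 2 ^ (t - 1) ≤ k) (hk2 : k ≤ 2 ^ t) : T.m k ≤ T.m (k + 2 ^ (t - 1)) := by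
  set p := 2 ^ (t - 1)
  have h2p : 2 ^ t = 2 * p := by rw [← pow_succ', Nat.sub_add_cancel ht1]
  have h4p : 2 ^ (t + 1) = 2 * (2 * p) := by rw [pow_succ, h2p, mul_comm]
  rw [m_eq_choose_mul_pow hT ht1 ht.le hk1 hk2, m_eq_choose_mul_pow hT (t := t + 1) (by omega) ht
    (by rw [Nat.add_sub_cancel, h2p]; omega) (by rw [h4p]; omega)]
  obtain ⟨s, hs⟩ : ∃ s, α - t = s + 1 := ⟨α - t - 1, by omega⟩
  obtain ⟨r, hr, rfl⟩ : ∃ r ≤ p, k = 2 * p - r := ⟨2 * p - k, by omega, by omega⟩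
  rw [Nat.add_sub_cancel, h2p, h4p, hs, show α - (t + 1) = s by omega,
    show 2 * p - (2 * p - r) = r by omega, show 2 * (2 * p) - (2 * p - r + p) = p + r by omega,
    show 2 * p - r + p = 3 * p - r by omega]
  exact Nat.choose_mul_two_pow_mul_le p r s hr

theorem m_le_m_two_mul_div_three_of_top (hT : T.PerfectUnitLength α) (hα : 1 ≤ α) {k : ℕ}
    (hk1 : 2 ^ (α - 1) ≤ k) (hk2 : k ≤ 2 ^ α) : T.m k ≤ T.m (2 * 2 ^ α / 3) := by
  have hn : 2 ^ α = 2 * 2 ^ (α - 1) := by rw [← pow_succ', Nat.sub_add_cancel hα]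
  rw [m_eq_choose_mul_pow_top hT hα hk1 hk2, m_eq_choose_mul_pow_top hT hα (by omega) (by omega),
    show 2 ^ α - 2 * 2 ^ α / 3 = (2 * 2 ^ (α - 1) + 2) / 3 by omega]
  exact Nat.choose_mul_two_pow_le _ _

theorem m_le_m_two_mul_div_three (hT : T.PerfectUnitLength α) {t k : ℕ} (ht1 : 1 ≤ t)
    (htα : t ≤ α) (hk1 : 2 ^ (t - 1) ≤ k) (hk2 : k ≤ 2 ^ t) :
    T.m k ≤ T.m (2 * 2 ^ α / 3) := by
  induction h : α - t generalizing t k with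
  | zero =>
    obtain rfl : t = α := by omega
    exact m_le_m_two_mul_div_three_of_top hT ht1 hk1 hk2
  | succ d ih =>
    have h2p : 2 ^ t = 2 * 2 ^ (t - 1) := by rw [← pow_succ', Nat.sub_add_cancel ht1]
    refine (m_le_m_add hT ht1 (by omega) hk1 hk2).trans (ih (t := t + 1) (by omega) (by omega)
      (by rw [Nat.add_sub_cancel]; omega) (by rw [pow_succ]; omega) (by omega))

theorem m_two_mul_div_three_add_one (hT : T.PerfectUnitLength α) (hα : 1 ≤ α)
    (hmod : 2 ^ α % 3 = 1) : T.m (2 * 2 ^ α / 3 + 1) = T.m (2 * 2 ^ α / 3) := by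
  have hn : 2 ^ α = 2 * 2 ^ (α - 1) := by rw [← pow_succ', Nat.sub_add_cancel hα]
  have hp : 1 ≤ 2 ^ (α - 1) := Nat.one_le_two_pow
  rw [m_eq_choose_mul_pow_top hT hα (by omega) (by omega),
    m_eq_choose_mul_pow_top hT hα (by omega) (by omega),
    show 2 ^ α - (2 * 2 ^ α / 3 + 1) = (2 * 2 ^ (α - 1) + 2) / 3 - 1 by omega,
    show 2 ^ α - 2 * 2 ^ α / 3 = (2 * 2 ^ (α - 1) + 2) / 3 by omega]
  exact Nat.choose_mul_two_pow_pred_eq _ (by omega)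

end PhyloTree

/-- Proposition 3 of the paper, maximising part.  For a
perfect unit-length tree of height `α` on `n = 2^α` leaves, the value
`k = ⌊2n/3⌋` maximises `m(T,k)` over `k ∈ {1,…,n}` and, when `n ≡ 1 (mod 3)`,
the value `k = ⌊2n/3⌋ + 1` attains the same (maximum) value. -/
theorem m_perfect_unit_length_maximisers
    {V : Type} [Fintype V] [DecidableEq V] (T : PhyloTree V)
    (α : ℕ) (hT : T.PerfectUnitLength α) (n : ℕ) (hn : n = 2 ^ α)
    (hn' : T.leaves.ncard = n) :
    (∀ k, 1 ≤ k → k ≤ n → T.m k ≤ T.m (2 * n / 3)) ∧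
    (n % 3 = 1 → T.m (2 * n / 3 + 1) = T.m (2 * n / 3)) := by
  subst hn
  rcases Nat.eq_zero_or_pos α with rfl | hα
  · rw [pow_zero] at hn'
    have h1 : T.m 1 = T.m 0 := by rw [← hn', T.m_ncard_leaves, T.m_zero]
    exact ⟨fun k hk1 hk2 => by rw [show k = 1 by omega]; exact h1.le, fun _ => h1⟩
  refine ⟨fun k hk1 hk2 => ?_, PhyloTree.m_two_mul_div_three_add_one hT hα⟩
  obtain ⟨t, ht1, htα, hk⟩ := Nat.exists_two_pow_pred_le_le_two_pow hk1 hα hk2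
  exact PhyloTree.m_le_m_two_mul_div_three hT ht1 htα hk.1 hk.2
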